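/- arXiv:1307.5494 — 3 statements merged into one kernel-verified Lean document; each statement's English description precedes it below -/
import Mathlib

section
/- Let w ∈ ℝ^d and r ∈ ℝ^n. The characteristic polynomial of the matrix M = [[I + w wᵀ, ‖r‖ w], [‖r‖ wᵀ, ‖r‖²]] equals (1−λ)^{d−1} (λ² − λ(‖w‖² + ‖r‖² + 1) + ‖r‖²). -/
/-! `M - λ I` is the diagonal matrix `diag(1 - λ, …, 1 - λ, -λ)` plus the rank-one matrix `u uᵀ`
with `u = (w, ‖r‖)`, so for `λ ∉ {0, 1}` the matrix determinant lemma gives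
`(1 - λ)ᵈ (-λ) (1 + ‖w‖² / (1 - λ) - ‖r‖² / λ)`. Both sides are continuous in `λ`, so the
identity extends to `λ = 0, 1`. -/

open Matrix

noncomputable def blockM {d n : ℕ} (w : EuclideanSpace ℝ (Fin d))
    (r : EuclideanSpace ℝ (Fin n)) : Matrix (Fin d ⊕ Unit) (Fin d ⊕ Unit) ℝ :=
  Matrix.fromBlocks (1 + Matrix.vecMulVec w w)
    (Matrix.of fun i _ => ‖r‖ * w i)
    (Matrix.of fun _ j => ‖r‖ * w j)
    (Matrix.of fun _ _ => ‖r‖ ^ 2)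

theorem Matrix.det_diagonal_add_vecMulVec {K m : Type*} [Field K] [Fintype m] [DecidableEq m]
    {D : m → K} (hD : ∀ i, D i ≠ 0) (u v : m → K) :
    (diagonal D + vecMulVec u v).det = (∏ i, D i) * (1 + ∑ i, u i * v i / D i) := by
  have hunit : IsUnit (diagonal D).det := by
    rw [det_diagonal]
    exact (Finset.prod_ne_zero_iff.mpr fun i _ => hD i).isUnit
  have hinv : (diagonal D)⁻¹ = diagonal fun i => (D i)⁻¹ :=
    inv_eq_left_inv <| by simp [inv_mul_cancel₀ (hD _)]
  rw [vecMulVec_eq Unit, det_add_replicateCol_mul_replicateRow hunit, det_diagonal, det_unique,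
    hinv, add_apply, one_apply_eq, Matrix.mul_apply]
  simp only [mul_diagonal, replicateRow_apply, replicateCol_apply, div_eq_mul_inv]
  exact congrArg _ (congrArg _ (Finset.sum_congr rfl fun i _ => by ring))

theorem blockM_sub_smul_one {d n : ℕ} (w : EuclideanSpace ℝ (Fin d))
    (r : EuclideanSpace ℝ (Fin n)) (lam : ℝ) :
    blockM w r - lam • 1 =
      diagonal (Sum.elim (fun _ => 1 - lam) fun _ => -lam) +
        vecMulVec (Sum.elim w fun _ => ‖r‖) (Sum.elim w fun _ => ‖r‖) := by
  ext (i | i) (j | j) <;>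
    simp [blockM, one_apply, diagonal_apply, vecMulVec_apply, mul_comm, sq, sub_eq_neg_add]
  split_ifs <;> ring

theorem det_blockM_sub_smul_one_of_ne {d n : ℕ} (hd : 1 ≤ d) (w : EuclideanSpace ℝ (Fin d))
    (r : EuclideanSpace ℝ (Fin n)) {lam : ℝ} (h0 : lam ≠ 0) (h1 : lam ≠ 1) :
    (blockM w r - lam • 1).det =
      (1 - lam) ^ (d - 1) * (lam ^ 2 - lam * (‖w‖ ^ 2 + ‖r‖ ^ 2 + 1) + ‖r‖ ^ 2) := by
  have h1' : 1 - lam ≠ 0 := sub_ne_zero.mpr h1.symm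
  rw [blockM_sub_smul_one, det_diagonal_add_vecMulVec
    (Sum.forall.mpr ⟨fun _ => h1', fun _ => neg_ne_zero.mpr h0⟩)]
  simp only [Fintype.prod_sum_type, Fintype.sum_sum_type, Sum.elim_inl, Sum.elim_inr,
    Finset.prod_const, Finset.card_univ, Fintype.card_fin, Fintype.card_unit, pow_one,
    Fintype.sum_unique, ← Finset.sum_div, ← sq]
  rw [EuclideanSpace.real_norm_sq_eq w]
  obtain ⟨k, rfl⟩ := Nat.exists_eq_add_of_le' hd
  rw [Nat.add_sub_cancel]
  field_simp
  ring

theorem stmt3 {d n : ℕ} (hd : 1 ≤ d) (w : EuclideanSpace ℝ (Fin d))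
    (r : EuclideanSpace ℝ (Fin n)) (lam : ℝ) :
    (blockM w r - lam • 1).det =
      (1 - lam) ^ (d - 1) * (lam ^ 2 - lam * (‖w‖ ^ 2 + ‖r‖ ^ 2 + 1) + ‖r‖ ^ 2) := by
  have hdense : Dense ({0, 1} : Set ℝ)ᶜ := (Set.toFinite _).countable.dense_compl ℝ
  have hlhs : Continuous fun x : ℝ => (blockM w r - x • 1).det := by fun_prop
  have hrhs : Continuous fun x : ℝ =>
      (1 - x) ^ (d - 1) * (x ^ 2 - x * (‖w‖ ^ 2 + ‖r‖ ^ 2 + 1) + ‖r‖ ^ 2) := by fun_prop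
  refine congrFun (hlhs.ext_on hdense hrhs fun x hx => ?_) lam
  simp only [Set.mem_compl_iff, Set.mem_insert_iff, Set.mem_singleton_iff, not_or] at hx
  exact det_blockM_sub_smul_one_of_ne hd w r hx.1 hx.2
end

section
/- Let U be an n×d matrix with orthonormal columns, w ∈ ℝ^d with w ≠ 0, r ∈ ℝ^n with r ≠ 0 and Uᵀ r = 0, and α, β ∈ ℝ with α²‖w‖² + β² = 1. Let Z be a d×(d−1) matrix with orthonormal columns spanning the orthogonal complement of w in ℝ^d. Then the matrix U' = U(α w wᵀ/‖w‖ + Z Zᵀ) + β (r/‖r‖)(wᵀ/‖w‖) equals U + [(α‖w‖ − 1) Uw/‖w‖ + β r/‖r‖] wᵀ/‖w‖, and U' has orthonormal columns. -/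
open Matrix

/-! Because `Z Zᵀ = I - w wᵀ / ‖w‖²`, the update is the rank-one perturbation `U' = U + x wᵀ`
with `x = a U w + b r`, `a = (α‖w‖ - 1) / ‖w‖²`, `b = β / (‖r‖ ‖w‖)`. Since `Uᵀ r = 0` we get
`Uᵀ x = a w` and `xᵀ x = a²‖w‖² + b²‖r‖²`, hence
`U'ᵀ U' = I + (2a + a²‖w‖² + b²‖r‖²) w wᵀ`, and this coefficient is
`(α²‖w‖² + β² - 1) / ‖w‖² = 0`. -/

section RankOneUpdate

variable {R m n : Type*} [CommRing R] [Fintype m] [DecidableEq n]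

theorem transpose_mul_self_add_vecMulVec {U : Matrix m n R} (hU : Uᵀ * U = 1)
    (x : m → R) (w : n → R) :
    (U + vecMulVec x w)ᵀ * (U + vecMulVec x w) =
      1 + vecMulVec w (Uᵀ *ᵥ x) + vecMulVec (Uᵀ *ᵥ x) w + (x ⬝ᵥ x) • vecMulVec w w := by
  rw [transpose_add, transpose_vecMulVec, Matrix.add_mul, Matrix.mul_add, Matrix.mul_add, hU,
    mul_vecMulVec, vecMulVec_mul, vecMulVec_mul_vecMulVec, ← mulVec_transpose, vecMulVec_smul]
  abel

theorem transpose_mul_self_add_vecMulVec_eq_one [Fintype n] {U : Matrix m n R} (hU : Uᵀ * U = 1)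
    {r : m → R} (hUr : Uᵀ *ᵥ r = 0) (w : n → R) {a b : R}
    (hab : 2 * a + a ^ 2 * (w ⬝ᵥ w) + b ^ 2 * (r ⬝ᵥ r) = 0) :
    (U + vecMulVec (a • U *ᵥ w + b • r) w)ᵀ * (U + vecMulVec (a • U *ᵥ w + b • r) w) = 1 := by
  set x := a • U *ᵥ w + b • r
  have hUx : Uᵀ *ᵥ x = a • w := by
    rw [mulVec_add, mulVec_smul, mulVec_smul, mulVec_mulVec, hU, one_mulVec, hUr, smul_zero,
      add_zero]
  have hxr : x ⬝ᵥ r = b * (r ⬝ᵥ r) := by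
    rw [add_dotProduct, smul_dotProduct, smul_dotProduct, dotProduct_comm, dotProduct_mulVec,
      ← mulVec_transpose, hUr, zero_dotProduct, smul_zero, zero_add, smul_eq_mul]
  have hxx : x ⬝ᵥ x = a ^ 2 * (w ⬝ᵥ w) + b ^ 2 * (r ⬝ᵥ r) := by
    calc x ⬝ᵥ x = a * (Uᵀ *ᵥ x ⬝ᵥ w) + b * (x ⬝ᵥ r) := by
          conv_lhs => rw [show x = a • U *ᵥ w + b • r from rfl]
          rw [dotProduct_add, dotProduct_smul, dotProduct_smul, dotProduct_mulVec,
            ← mulVec_transpose, smul_eq_mul, smul_eq_mul]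
      _ = _ := by rw [hUx, hxr, smul_dotProduct, smul_eq_mul]; ring
  rw [transpose_mul_self_add_vecMulVec hU, hUx, hxx, vecMulVec_smul, smul_vecMulVec]
  linear_combination (norm := module) hab • vecMulVec w w

end RankOneUpdate

lemma EuclideanSpace.dotProduct_self_eq_norm_sq {ι : Type*} [Fintype ι] (v : EuclideanSpace ℝ ι) :
    v.ofLp ⬝ᵥ v.ofLp = ‖v‖ ^ 2 := by
  rw [← real_inner_self_eq_norm_sq, EuclideanSpace.inner_eq_star_dotProduct, star_trivial]

theorem stmt13_general {n d : ℕ} (U : Matrix (Fin n) (Fin d) ℝ) (hU : Uᵀ * U = 1)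
    (w : EuclideanSpace ℝ (Fin d)) (hw : w ≠ 0)
    (r : EuclideanSpace ℝ (Fin n)) (hr : r ≠ 0) (hUr : Uᵀ.mulVec r = 0)
    (α β : ℝ) (hαβ : α ^ 2 * ‖w‖ ^ 2 + β ^ 2 = 1)
    (Z : Matrix (Fin d) (Fin (d - 1)) ℝ)
    (hZZ : Z * Zᵀ = 1 - (‖w‖ ^ 2)⁻¹ • Matrix.vecMulVec w w)
    (U' : Matrix (Fin n) (Fin d) ℝ)
    (hU' : U' = U * ((α / ‖w‖) • Matrix.vecMulVec w w + Z * Zᵀ) +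
      (β / (‖r‖ * ‖w‖)) • Matrix.vecMulVec r w) :
    U' = U + Matrix.vecMulVec
        (((α * ‖w‖ - 1) / ‖w‖) • (WithLp.equiv 2 (Fin n → ℝ)).symm (U.mulVec w) + (β / ‖r‖) • r) ((‖w‖)⁻¹ • w) ∧
      U'ᵀ * U' = 1 := by
  have hw₀ : ‖w‖ ≠ 0 := norm_ne_zero_iff.mpr hw
  have hr₀ : ‖r‖ ≠ 0 := norm_ne_zero_iff.mpr hr
  have hU'_eq : U' = U + vecMulVec
      (((α * ‖w‖ - 1) / ‖w‖ ^ 2) • U *ᵥ w.ofLp + (β / (‖r‖ * ‖w‖)) • r.ofLp) w.ofLp := by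
    rw [hU', hZZ, Matrix.mul_add, Matrix.mul_sub, Matrix.mul_one, Matrix.mul_smul,
      Matrix.mul_smul, mul_vecMulVec, add_vecMulVec, smul_vecMulVec, smul_vecMulVec]
    match_scalars <;> field_simp
    ring
  refine ⟨hU'_eq.trans ?_, hU'_eq ▸ transpose_mul_self_add_vecMulVec_eq_one hU hUr w ?_⟩
  · simp only [WithLp.ofLp_add, WithLp.ofLp_smul, WithLp.equiv_symm_apply, add_vecMulVec,
      vecMulVec_smul, smul_vecMulVec]
    match_scalars <;> field_simp
  · rw [EuclideanSpace.dotProduct_self_eq_norm_sq, EuclideanSpace.dotProduct_self_eq_norm_sq]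
    field_simp
    linear_combination hαβ

theorem stmt13 {n d : ℕ} (U : Matrix (Fin n) (Fin d) ℝ) (hU : Uᵀ * U = 1)
    (w : EuclideanSpace ℝ (Fin d)) (hw : w ≠ 0)
    (r : EuclideanSpace ℝ (Fin n)) (hr : r ≠ 0) (hUr : Uᵀ.mulVec r = 0)
    (α β : ℝ) (hαβ : α ^ 2 * ‖w‖ ^ 2 + β ^ 2 = 1)
    (Z : Matrix (Fin d) (Fin (d - 1)) ℝ) (hZ : Zᵀ * Z = 1)
    (hZw : Zᵀ.mulVec w = 0)
    (hZZ : Z * Zᵀ = 1 - (‖w‖ ^ 2)⁻¹ • Matrix.vecMulVec w w)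
    (U' : Matrix (Fin n) (Fin d) ℝ)
    (hU' : U' = U * ((α / ‖w‖) • Matrix.vecMulVec w w + Z * Zᵀ) +
      (β / (‖r‖ * ‖w‖)) • Matrix.vecMulVec r w) :
    U' = U + Matrix.vecMulVec
        (((α * ‖w‖ - 1) / ‖w‖) • (WithLp.equiv 2 (Fin n → ℝ)).symm (U.mulVec w) + (β / ‖r‖) • r) ((‖w‖)⁻¹ • w) ∧
      U'ᵀ * U' = 1 :=
  stmt13_general U hU w hw r hr hUr α β hαβ Z hZZ U' hU'
end

section
/- Let U be an n×d matrix with orthonormal columns, w ∈ ℝ^d nonzero, p = Uw, and r ∈ ℝ^n nonzero with Uᵀ r = 0. For any θ ∈ ℝ, the matrix U' = U + (cos θ − 1)(p/‖p‖)(wᵀ/‖w‖) + sin θ (r/‖r‖)(wᵀ/‖w‖) satisfies U'ᵀ U' = I_d (i.e., the GROUSE update preserves orthonormality of the columns). -/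
/-!
Write `U' = U + z vᵀ` with `z = (cos θ - 1) x + sin θ y`, where `x = p/‖p‖`, `y = r/‖r‖` and
`v = w/‖w‖`. Since `U` is an isometry, `‖p‖ = ‖w‖` and `Uᵀ p = w`, so `Uᵀ x = v`; also `Uᵀ y = 0`
and `x ⊥ y`. Expanding, `U'ᵀ U' = I + (2 (cos θ - 1) + (cos θ - 1)² + sin² θ) v vᵀ`, and the
coefficient is `cos² θ + sin² θ - 1 = 0`.
-/

open Matrix

namespace Matrix

variable {R m k : Type*} [CommRing R] [Fintype m]

theorem transpose_mul_self_add_vecMulVec (U : Matrix m k R) (z : m → R) (v : k → R) :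
    (U + vecMulVec z v)ᵀ * (U + vecMulVec z v) =
      Uᵀ * U + vecMulVec (Uᵀ *ᵥ z) v + vecMulVec v (Uᵀ *ᵥ z) + (z ⬝ᵥ z) • vecMulVec v v := by
  rw [transpose_add, transpose_vecMulVec, Matrix.add_mul, Matrix.mul_add, Matrix.mul_add,
    mul_vecMulVec, vecMulVec_mul, vecMulVec_mul_vecMulVec, vecMulVec_smul, ← mulVec_transpose]
  abel

theorem transpose_mul_self_add_rotation [DecidableEq k] {U : Matrix m k R} {x y : m → R}
    {v : k → R} (hU : Uᵀ * U = 1) (hUx : Uᵀ *ᵥ x = v) (hUy : Uᵀ *ᵥ y = 0) (hxx : x ⬝ᵥ x = 1)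
    (hyy : y ⬝ᵥ y = 1) (hxy : x ⬝ᵥ y = 0) (c s : R) :
    (U + (c - 1) • vecMulVec x v + s • vecMulVec y v)ᵀ *
        (U + (c - 1) • vecMulVec x v + s • vecMulVec y v) =
      1 + (c ^ 2 + s ^ 2 - 1) • vecMulVec v v := by
  have hUz : Uᵀ *ᵥ ((c - 1) • x + s • y) = (c - 1) • v := by
    rw [mulVec_add, mulVec_smul, mulVec_smul, hUx, hUy, smul_zero, add_zero]
  have hzz : ((c - 1) • x + s • y) ⬝ᵥ ((c - 1) • x + s • y) = (c - 1) ^ 2 + s ^ 2 := by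
    simp only [add_dotProduct, dotProduct_add, smul_dotProduct, dotProduct_smul, hxx, hyy, hxy,
      dotProduct_comm y x, smul_eq_mul]
    ring
  rw [add_assoc, ← smul_vecMulVec, ← smul_vecMulVec, ← add_vecMulVec,
    transpose_mul_self_add_vecMulVec, hU, hUz, hzz, smul_vecMulVec, vecMulVec_smul, add_assoc,
    add_assoc, ← add_smul, ← add_smul]
  congr 2
  ring

end Matrix

namespace EuclideanSpace

variable {m : Type*} [Fintype m]

theorem ofLp_dotProduct_self (x : EuclideanSpace ℝ m) : x.ofLp ⬝ᵥ x.ofLp = ‖x‖ ^ 2 := by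
  rw [← real_inner_self_eq_norm_sq, inner_eq_star_dotProduct, star_trivial]

theorem ofLp_dotProduct_self_normalize {x : EuclideanSpace ℝ m} (hx : x ≠ 0) :
    (‖x‖⁻¹ • x).ofLp ⬝ᵥ (‖x‖⁻¹ • x).ofLp = 1 := by
  rw [ofLp_dotProduct_self, norm_smul, norm_inv, norm_norm,
    inv_mul_cancel₀ (norm_ne_zero_iff.mpr hx), one_pow]

theorem norm_toLp_mulVec_of_transpose_mul_self {k : Type*} [Fintype k] [DecidableEq k]
    {U : Matrix m k ℝ} (hU : Uᵀ * U = 1) (w : EuclideanSpace ℝ k) :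
    ‖WithLp.toLp 2 (U *ᵥ w.ofLp)‖ = ‖w‖ := by
  have hsq : ‖WithLp.toLp 2 (U *ᵥ w.ofLp)‖ ^ 2 = ‖w‖ ^ 2 := by
    rw [← ofLp_dotProduct_self, ← ofLp_dotProduct_self, WithLp.ofLp_toLp, dotProduct_mulVec,
      ← mulVec_transpose, mulVec_mulVec, hU, one_mulVec, dotProduct_comm]
  exact (sq_eq_sq₀ (norm_nonneg _) (norm_nonneg _)).mp hsq

end EuclideanSpace

open EuclideanSpace in
theorem stmt14 {n d : ℕ} (U : Matrix (Fin n) (Fin d) ℝ) (hU : Uᵀ * U = 1)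
    (w : EuclideanSpace ℝ (Fin d)) (hw : w ≠ 0)
    (r : EuclideanSpace ℝ (Fin n)) (hr : r ≠ 0) (hUr : Uᵀ.mulVec r = 0)
    (p : EuclideanSpace ℝ (Fin n)) (hp : p = (WithLp.equiv 2 (Fin n → ℝ)).symm (U.mulVec w))
    (θ : ℝ) :
    (U + (Real.cos θ - 1) • Matrix.vecMulVec ((‖p‖)⁻¹ • p) ((‖w‖)⁻¹ • w)
        + Real.sin θ • Matrix.vecMulVec ((‖r‖)⁻¹ • r) ((‖w‖)⁻¹ • w))ᵀ *
      (U + (Real.cos θ - 1) • Matrix.vecMulVec ((‖p‖)⁻¹ • p) ((‖w‖)⁻¹ • w)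
        + Real.sin θ • Matrix.vecMulVec ((‖r‖)⁻¹ • r) ((‖w‖)⁻¹ • w)) = 1 := by
  have hpU : p.ofLp = U *ᵥ w.ofLp := by rw [hp]; rfl
  have hnorm : ‖p‖ = ‖w‖ := by rw [hp]; exact norm_toLp_mulVec_of_transpose_mul_self hU w
  have hp0 : p ≠ 0 := norm_ne_zero_iff.mp (hnorm ▸ norm_ne_zero_iff.mpr hw)
  have hUx : Uᵀ *ᵥ (‖p‖⁻¹ • p).ofLp = (‖w‖⁻¹ • w).ofLp := by
    rw [WithLp.ofLp_smul, WithLp.ofLp_smul, mulVec_smul, hpU, mulVec_mulVec, hU, one_mulVec, hnorm]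
  have hUy : Uᵀ *ᵥ (‖r‖⁻¹ • r).ofLp = 0 := by
    rw [WithLp.ofLp_smul, mulVec_smul, hUr, smul_zero]
  have hxy : (‖p‖⁻¹ • p).ofLp ⬝ᵥ (‖r‖⁻¹ • r).ofLp = 0 := by
    rw [WithLp.ofLp_smul, WithLp.ofLp_smul, smul_dotProduct, dotProduct_smul, hpU,
      dotProduct_comm, dotProduct_mulVec, ← mulVec_transpose, hUr, zero_dotProduct, smul_zero,
      smul_zero]
  rw [transpose_mul_self_add_rotation hU hUx hUy (ofLp_dotProduct_self_normalize hp0)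
    (ofLp_dotProduct_self_normalize hr) hxy, Real.cos_sq_add_sin_sq, sub_self, zero_smul, add_zero]
end
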